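/- Let K be a field and P, Q, R ∈ K[x] with no common factor. Let (p₁,q₁,r₁), (p₂,q₂,r₂) be a basis of the syzygy module of P, Q, R, and let α₁,β₁,γ₁,α₂,β₂,γ₂ ∈ K. Then det of the 2×2 matrix with entries M₁₁ = α₁p₁P + β₁q₁Q + γ₁r₁R, M₁₂ = α₂p₁P + β₂q₁Q + γ₂r₁R, M₂₁ = α₁p₂P + β₁q₂Q + γ₁r₂R, M₂₂ = α₂p₂P + β₂q₂Q + γ₂r₂R is a K-scalar multiple of the product PQR. -/

import Mathlib

/-!
The two basis syzygies `v₁ = (p₁, q₁, r₁)` and `v₂ = (p₂, q₂, r₂)` are both orthogonal to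
`u = (P, Q, R)`, so their cross product is parallel to `u`; since `P, Q, R` generate the unit
ideal, this forces `v₁ × v₂ = E • u` for a polynomial `E`. If `E` were a nonzero non-unit, then
`E` would divide every `2 × 2` minor of `(v₁, v₂)`; choosing `i` with `E ∤ v₁ i`, the combination
`v₂ i • v₁ - v₁ i • v₂` would be `E` times a syzygy, although its coefficient `-v₁ i` on the
basis is not divisible by `E`. So `E` is a constant `e`, and by Cauchy–Binet the determinant
equals `e` times `P Q R` times the sum of the `2 × 2` minors of the coefficient matrix.
-/

open Polynomial

/-- The module of syzygies between three univariate polynomials `P, Q, R`: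
triples `(p, q, r)` with `p*P + q*Q + r*R = 0`, as a submodule of `(K[x])³`. -/
noncomputable def syzygyModule {K : Type*} [Field K] (P Q R : K[X]) :
    Submodule K[X] (Fin 3 → K[X]) :=
  LinearMap.ker
    (P • (LinearMap.proj 0 : (Fin 3 → K[X]) →ₗ[K[X]] K[X])
      + Q • (LinearMap.proj 1 : (Fin 3 → K[X]) →ₗ[K[X]] K[X])
      + R • (LinearMap.proj 2 : (Fin 3 → K[X]) →ₗ[K[X]] K[X]))

open Matrix

theorem exists_dotProduct_eq_one_of_forall_dvd_isUnit {R ι : Type*} [CommRing R]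
    [IsPrincipalIdealRing R] [Fintype ι] (u : ι → R)
    (hu : ∀ d : R, (∀ i, d ∣ u i) → IsUnit d) : ∃ a : ι → R, a ⬝ᵥ u = 1 := by
  set I := Ideal.span (Set.range u)
  have hI : I = ⊤ := by
    rw [← Ideal.span_singleton_generator I, Ideal.span_singleton_eq_top]
    exact hu _ fun i =>
      (Submodule.IsPrincipal.mem_iff_generator_dvd I).1 (Ideal.subset_span ⟨i, rfl⟩)
  exact Ideal.mem_span_range_iff_exists_fun.1 (show (1 : R) ∈ I by rw [hI]; trivial)

section CrossProduct

variable {R : Type*} [CommRing R]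

theorem cross_eq_smul_of_dotProduct_eq_zero {u v w a : Fin 3 → R}
    (hv : u ⬝ᵥ v = 0) (hw : u ⬝ᵥ w = 0) (ha : a ⬝ᵥ u = 1) :
    v ⨯₃ w = (a ⬝ᵥ v ⨯₃ w) • u := by
  have hpar : u ⨯₃ (v ⨯₃ w) = 0 := by
    rw [cross_cross_eq_smul_sub_smul', hw, dotProduct_comm, hv, zero_smul, zero_smul, sub_zero]
  have h := cross_cross_eq_smul_sub_smul' a u (v ⨯₃ w)
  rw [hpar, map_zero, dotProduct_comm u a, ha, one_smul] at h
  exact (sub_eq_zero.1 h.symm).symm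

theorem dvd_minor_of_dvd_cross {π : R} {x y : Fin 3 → R} (h : ∀ k, π ∣ (x ⨯₃ y) k)
    (i j : Fin 3) : π ∣ y i * x j - x i * y j := by
  have h0 := h 0
  have h1 := h 1
  have h2 := h 2
  simp only [cross_apply, Fin.isValue, cons_val_zero, cons_val_one, cons_val_two] at h0 h1 h2
  fin_cases i <;> fin_cases j <;> simp only [Fin.isValue, Fin.zero_eta, Fin.mk_one,
    Fin.reduceFinMk, mul_comm (y _), sub_self, dvd_zero] <;> first
    | assumption
    | rwa [dvd_sub_comm]

end CrossProduct

section Saturated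

def Submodule.IsSaturated {R M : Type*} [Semiring R] [AddCommMonoid M] [Module R M]
    (N : Submodule R M) : Prop :=
  ∀ (a : R) (x : M), a ≠ 0 → a • x ∈ N → x ∈ N

theorem LinearMap.isSaturated_ker {R M M' : Type*} [Semiring R] [AddCommMonoid M]
    [AddCommMonoid M'] [Module R M] [Module R M'] [NoZeroSMulDivisors R M'] (f : M →ₗ[R] M') :
    (LinearMap.ker f).IsSaturated := fun a x ha h => by
  rw [LinearMap.mem_ker, map_smul] at h
  exact (eq_zero_or_eq_zero_of_smul_eq_zero h).resolve_left ha

variable {R ι κ : Type*} [CommRing R]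

theorem dvd_basis_repr_of_dvd {N : Submodule R (ι → R)} (hN : N.IsSaturated)
    (b : Module.Basis κ R N) {π : R} (hπ : π ≠ 0) {v : N} (hv : ∀ i, π ∣ (v : ι → R) i)
    (k : κ) : π ∣ b.repr v k := by
  choose w hw using hv
  have hvw : (v : ι → R) = π • w := funext hw
  have hvπ : v = π • ⟨w, hN π w hπ (hvw ▸ v.2)⟩ := Subtype.ext hvw
  rw [hvπ, map_smul]
  exact dvd_mul_right π _

theorem isUnit_of_dvd_cross_basis {N : Submodule R (Fin 3 → R)} (hN : N.IsSaturated)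
    (b : Module.Basis (Fin 2) R N) {π : R} (hπ : π ≠ 0)
    (hcross : ∀ k, π ∣ ((b 0 : Fin 3 → R) ⨯₃ b 1) k) : IsUnit π := by
  by_contra hπu
  obtain ⟨i, hi⟩ : ∃ i, ¬ π ∣ (b 0 : Fin 3 → R) i := by
    by_contra! h
    have := dvd_basis_repr_of_dvd hN b hπ h 0
    rw [b.repr_self, Finsupp.single_eq_same] at this
    exact hπu (isUnit_of_dvd_one this)
  have hcomb : ∀ j, π ∣ (((b 1 : Fin 3 → R) i • b 0 - (b 0 : Fin 3 → R) i • b 1 : N) :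
      Fin 3 → R) j := fun j => by
    simpa [smul_eq_mul] using dvd_minor_of_dvd_cross hcross i j
  exact hi (by simpa [b.repr_self] using dvd_basis_repr_of_dvd hN b hπ hcomb 1)

end Saturated

section Syzygy

variable {K : Type*} [Field K] {P Q R : K[X]}

theorem mem_syzygyModule_iff {v : Fin 3 → K[X]} :
    v ∈ syzygyModule P Q R ↔ ![P, Q, R] ⬝ᵥ v = 0 := by
  rw [syzygyModule, LinearMap.mem_ker, vec3_dotProduct]
  simp

theorem isSaturated_syzygyModule : (syzygyModule P Q R).IsSaturated :=
  LinearMap.isSaturated_ker _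

theorem exists_cross_basis_eq_C_smul (hcop : ∀ d : K[X], d ∣ P → d ∣ Q → d ∣ R → IsUnit d)
    (b : Module.Basis (Fin 2) K[X] (syzygyModule P Q R)) :
    ∃ e : K, (b 0 : Fin 3 → K[X]) ⨯₃ b 1 = C e • ![P, Q, R] := by
  obtain ⟨a, ha⟩ := exists_dotProduct_eq_one_of_forall_dvd_isUnit ![P, Q, R] fun d hd =>
    hcop d (hd 0) (hd 1) (hd 2)
  have hcross := cross_eq_smul_of_dotProduct_eq_zero (mem_syzygyModule_iff.1 (b 0).2)
    (mem_syzygyModule_iff.1 (b 1).2) ha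
  set E := a ⬝ᵥ (b 0 : Fin 3 → K[X]) ⨯₃ b 1
  rcases eq_or_ne E 0 with hE | hE
  · exact ⟨0, by rw [hcross, hE, map_zero]⟩
  have hEu : IsUnit E := isUnit_of_dvd_cross_basis isSaturated_syzygyModule b hE
    fun k => by rw [hcross]; exact dvd_mul_right E _
  obtain ⟨e, -, he⟩ := Polynomial.isUnit_iff.1 hEu
  exact ⟨e, by rw [hcross, he]⟩

end Syzygy

theorem det_combination_is_multiple_of_PQR {K : Type*} [Field K]
    (P Q R p₁ q₁ r₁ p₂ q₂ r₂ : K[X])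
    (hcop : ∀ d : K[X], d ∣ P → d ∣ Q → d ∣ R → IsUnit d)
    (h₁ : (![p₁, q₁, r₁] : Fin 3 → K[X]) ∈ syzygyModule P Q R)
    (h₂ : (![p₂, q₂, r₂] : Fin 3 → K[X]) ∈ syzygyModule P Q R)
    (b : Module.Basis (Fin 2) K[X] (syzygyModule P Q R))
    (hb0 : b 0 = ⟨![p₁, q₁, r₁], h₁⟩) (hb1 : b 1 = ⟨![p₂, q₂, r₂], h₂⟩)
    (α₁ β₁ γ₁ α₂ β₂ γ₂ : K) :
    ∃ c : K,
      (C α₁ * p₁ * P + C β₁ * q₁ * Q + C γ₁ * r₁ * R)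
          * (C α₂ * p₂ * P + C β₂ * q₂ * Q + C γ₂ * r₂ * R)
        - (C α₂ * p₁ * P + C β₂ * q₁ * Q + C γ₂ * r₁ * R)
          * (C α₁ * p₂ * P + C β₁ * q₂ * Q + C γ₁ * r₂ * R)
        = C c * (P * Q * R) := by
  obtain ⟨e, he⟩ := exists_cross_basis_eq_C_smul hcop b
  rw [hb0, hb1, cross_apply] at he
  have hm₁ : q₁ * r₂ - r₁ * q₂ = C e * P := by simpa using congrFun he 0
  have hm₂ : r₁ * p₂ - p₁ * r₂ = C e * Q := by simpa using congrFun he 1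
  have hm₃ : p₁ * q₂ - q₁ * p₂ = C e * R := by simpa using congrFun he 2
  refine ⟨e * (α₁ * β₂ - α₂ * β₁ - (α₁ * γ₂ - α₂ * γ₁) + (β₁ * γ₂ - β₂ * γ₁)), ?_⟩
  simp only [map_mul, map_add, map_sub]
  linear_combination (C α₁ * C β₂ - C α₂ * C β₁) * P * Q * hm₃
    - (C α₁ * C γ₂ - C α₂ * C γ₁) * P * R * hm₂ + (C β₁ * C γ₂ - C β₂ * C γ₁) * Q * R * hm₁
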